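/- arXiv:0912.4953 — 2 statements merged into one kernel-verified Lean document; each statement's English description precedes it below -/
import Mathlib

section
/- For ξ ∈ ∂F, an element g lies in the horosphere H_ξ = {g : h_ξ(g) = 0} if and only if the reduced form of g is g = ξ_1ξ_2···ξ_n t_1···t_n for some n ≥ 0 and t_1,...,t_n ∈ S with t_1 ≠ ξ_{n+1}. In particular, every element of H_ξ has even word length. -/
open Filter

/-- The symmetric generating set of the free group of rank `r`. -/
abbrev Letter (r : ℕ) := Fin r × Bool

/-- The inverse of a letter. -/
def Letter.inv {r : ℕ} (s : Letter r) : Letter r := (s.1, !s.2)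

/-- The boundary of the free group of rank `r`. -/
abbrev Boundary (r : ℕ) := {ξ : ℕ → Letter r // ∀ i, ξ (i + 1) ≠ Letter.inv (ξ i)}

/-- The initial segment `ξ₁⋯ξₙ` of a boundary point, as a word. -/
def prefixList {r : ℕ} (ξ : Boundary r) (n : ℕ) : List (Letter r) :=
  List.ofFn (fun i : Fin n => ξ.1 i)

/-- The horofunction associated to `ξ`, evaluated via
`h_ξ(g) = lim_{k→∞} (d(g, ξ₁⋯ξ_k) - k)`. -/
def horofn {r : ℕ} (ξ : Boundary r) (g : FreeGroup (Fin r)) (v : ℤ) : Prop :=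
  Tendsto
    (fun k : ℕ =>
      (((FreeGroup.toWord (g⁻¹ * FreeGroup.mk (prefixList ξ k))).length : ℤ) - (k : ℤ)))
    atTop (nhds v)

/-!
Write the reduced word of `g` as `ξ₁⋯ξₘ t`, where `t` does not begin with `ξₘ₊₁`. For `k ≥ m`
the word `t⁻¹ ξₘ₊₁⋯ξₖ` is reduced, so `|g⁻¹ ξ₁⋯ξₖ| - k = |t| - m` for all large `k` and
`h_ξ(g) = |t| - m`. Thus `h_ξ(g) = 0` exactly when `|t| = m`, and then `|g| = 2m`.
-/

open FreeGroup

theorem FreeGroup.IsReduced.invRev {α : Type*} [DecidableEq α] {L : List (α × Bool)}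
    (h : IsReduced L) : IsReduced (invRev L) :=
  isReduced_iff_reduce_eq.mpr (by rw [reduce_invRev, h.reduce_eq])

namespace Letter

variable {r : ℕ}

@[simp]
theorem inv_inv (s : Letter r) : s.inv.inv = s := by
  simp [Letter.inv]

theorem ne_inv_iff {a b : Letter r} : b ≠ a.inv ↔ (a.1 = b.1 → a.2 = b.2) := by
  obtain ⟨a₁, a₂⟩ := a
  obtain ⟨b₁, b₂⟩ := b
  simp only [Letter.inv, ne_eq, Prod.mk.injEq, not_and]
  constructor
  · rintro h rfl
    cases a₂ <;> cases b₂ <;> simp_all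
  · rintro h rfl
    simp_all

end Letter

namespace Boundary

variable {r : ℕ}

def shift (ξ : Boundary r) (m : ℕ) : Boundary r :=
  ⟨fun i => ξ.1 (m + i), fun i => ξ.2 (m + i)⟩

end Boundary

section PrefixList

variable {r : ℕ} (ξ : Boundary r)

@[simp]
theorem length_prefixList (n : ℕ) : (prefixList ξ n).length = n := by
  simp [prefixList]

theorem prefixList_add (m d : ℕ) :
    prefixList ξ (m + d) = prefixList ξ m ++ prefixList (ξ.shift m) d := by
  simp [prefixList, Boundary.shift, List.ofFn_add]

theorem head?_prefixList_succ (n : ℕ) : (prefixList ξ (n + 1)).head? = some (ξ.1 0) := by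
  simp [prefixList, List.ofFn_succ]

theorem isReduced_prefixList (n : ℕ) : IsReduced (prefixList ξ n) :=
  List.isChain_ofFn.mpr fun i _ => Letter.ne_inv_iff.mp (ξ.2 i)

theorem exists_eq_prefixList_append (w : List (Letter r)) :
    ∃ m t, w = prefixList ξ m ++ t ∧ ∀ a ∈ t.head?, a ≠ ξ.1 m := by
  induction w generalizing ξ with
  | nil => exact ⟨0, [], rfl, by simp⟩
  | cons a w ih =>
    by_cases ha : a = ξ.1 0
    · obtain ⟨m, t, hw, ht⟩ := ih (ξ.shift 1)
      refine ⟨1 + m, t, ?_, ht⟩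
      rw [prefixList_add, List.append_assoc, ← hw, ha]
      rfl
    · exact ⟨0, a :: w, rfl, by simpa using ha⟩

end PrefixList

section Horofunction

variable {r : ℕ} {ξ : Boundary r} {g : FreeGroup (Fin r)} {m : ℕ} {t : List (Letter r)}

theorem toWord_inv_mul_mk_prefixList_add (hw : toWord g = prefixList ξ m ++ t)
    (ht : ∀ a ∈ t.head?, a ≠ ξ.1 m) (d : ℕ) :
    toWord (g⁻¹ * mk (prefixList ξ (m + d))) = invRev t ++ prefixList (ξ.shift m) d := by
  have hg : g = mk (prefixList ξ m) * mk t := by rw [mul_mk, ← hw, mk_toWord]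
  have hwred : IsReduced (prefixList ξ m ++ t) := hw ▸ isReduced_toWord
  have hred : IsReduced (invRev t ++ prefixList (ξ.shift m) d) := by
    refine List.isChain_append.mpr
      ⟨(hwred.infix (List.suffix_append _ _).isInfix).invRev,
        isReduced_prefixList _ d, fun x hx y hy => Letter.ne_inv_iff.mp ?_⟩
    have hlast : (invRev t).getLast? = t.head?.map Letter.inv := by
      simp only [invRev, List.getLast?_reverse, List.head?_map]
      rfl
    obtain ⟨a, ha, rfl⟩ := Option.mem_map.mp (hlast ▸ hx)
    obtain _ | e := d
    · simp [prefixList] at hy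
    rw [head?_prefixList_succ, Option.mem_some_iff] at hy
    rw [← hy, Letter.inv_inv]
    exact (ht a ha).symm
  rw [hg, prefixList_add, ← mul_mk, mul_inv_rev, mul_assoc, inv_mul_cancel_left, inv_mk, mul_mk,
    toWord_mk, hred.reduce_eq]

theorem horofn_iff_of_toWord_eq (hw : toWord g = prefixList ξ m ++ t)
    (ht : ∀ a ∈ t.head?, a ≠ ξ.1 m) (v : ℤ) :
    horofn ξ g v ↔ v = t.length - m := by
  have hconst : ∀ d : ℕ,
      ((toWord (g⁻¹ * mk (prefixList ξ (d + m)))).length : ℤ) - ↑(d + m) = t.length - m := by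
    intro d
    rw [add_comm d m, toWord_inv_mul_mk_prefixList_add hw ht, List.length_append,
      invRev_length, length_prefixList]
    push_cast
    ring
  rw [horofn, ← tendsto_add_atTop_iff_nat m]
  simp only [hconst, tendsto_const_nhds_iff, eq_comm]

end Horofunction

theorem horosphere_characterization_general (r : ℕ) (ξ : Boundary r)
    (g : FreeGroup (Fin r)) :
    (horofn ξ g 0 ↔
      ∃ n : ℕ, ∃ t : List (Letter r),
        FreeGroup.toWord g = prefixList ξ n ++ t ∧ t.length = n ∧
        ∀ a ∈ t.head?, a ≠ ξ.1 n) ∧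
    (horofn ξ g 0 → Even (FreeGroup.toWord g).length) := by
  obtain ⟨m, t, hw, ht⟩ := exists_eq_prefixList_append ξ (toWord g)
  have hm : horofn ξ g 0 ↔ t.length = m := by
    rw [horofn_iff_of_toWord_eq hw ht]
    omega
  refine ⟨⟨fun h => ⟨m, t, hw, hm.mp h, ht⟩, ?_⟩, fun h => ⟨m, ?_⟩⟩
  · rintro ⟨n, t', hw', hlen, ht'⟩
    rw [horofn_iff_of_toWord_eq hw' ht']
    omega
  · rw [hw, List.length_append, length_prefixList, hm.mp h]

/-- An element `g` lies in the horosphere `H_ξ = {g : h_ξ(g) = 0}` if and only if the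
reduced form of `g` is `g = ξ₁⋯ξₙ t₁⋯tₙ` for some `n ≥ 0` and letters `t₁,…,tₙ`
with `t₁ ≠ ξ_{n+1}`.  In particular, every element of `H_ξ` has even word length. -/
theorem horosphere_characterization (r : ℕ) (hr : 2 ≤ r) (ξ : Boundary r)
    (g : FreeGroup (Fin r)) :
    (horofn ξ g 0 ↔
      ∃ n : ℕ, ∃ t : List (Letter r),
        FreeGroup.toWord g = prefixList ξ n ++ t ∧ t.length = n ∧
        ∀ a ∈ t.head?, a ≠ ξ.1 n) ∧
    (horofn ξ g 0 → Even (FreeGroup.toWord g).length) :=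
  horosphere_characterization_general r ξ g
end

section
/- Dense set of good functions: if R(B) is a countable measure-preserving Borel equivalence relation on (B,ν) and the sequence F = {F_n} is asymptotically invariant with respect to a countable generating set Φ of inner automorphisms, then for every f ∈ L^∞(B) and every φ in the group generated by Φ, the averages A_n[F; f - f∘φ] converge pointwise a.e. to 0; moreover the linear span of the R(B)-invariant L² functions together with the functions f - f∘φ (f ∈ L^∞, φ ∈ ⟨Φ⟩) is dense in L²(B,ν). -/
/-!
Part (1): `A_n[F; f - f ∘ φ]` telescopes to sums over `F_n(b) \ φ(F_n(b))` and
`φ(F_n(b)) \ F_n(b)`, so it is bounded by `‖f‖_∞ · |F_n(b) ∆ φ(F_n(b))| / |F_n(b)|`. This defect is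
subadditive under composition and invariant under inversion, so asymptotic invariance passes
from `Φ` to the group `⟨Φ⟩`.

Part (2): it suffices that an `L²` function `r` orthogonal to all good functions vanishes.
Orthogonality to `1_A - 1_A ∘ ψ` says `∫_{ψ⁻¹A} r = ∫_A r`; since `P = {r > 0}` maximizes
`Q ↦ ∫_Q r`, this forces `P ⊆ ψ⁻¹P` a.e. for every `ψ ∈ ⟨Φ⟩`. As `⟨Φ⟩` is countable, `P` is then
a.e. equal to `⋂_{ψ ∈ ⟨Φ⟩} ψ⁻¹P`, which is invariant under `⟨Φ⟩` and hence, `Φ` being generating,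
`R`-invariant. Orthogonality to its indicator gives `∫_P r = 0`, so `ν P = 0`, i.e. `r ≤ 0`;
the same for `-r` gives `r = 0`.
-/

open MeasureTheory Filter
open scoped ENNReal BigOperators

/-- A countable Borel equivalence relation on a measurable space `B`. -/
structure CBER (B : Type*) [MeasurableSpace B] where
  rel : B → B → Prop
  equivalence : Equivalence rel
  countable_classes : ∀ b, {b' | rel b b'}.Countable
  measurableSet_rel : MeasurableSet {p : B × B | rel p.1 p.2}

variable {B : Type*} [MeasurableSpace B]

/-- `ν` is `R`-invariant (`ν × c = c × ν` on `R`), via the mass-transport identity. -/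
def CBER.Invariant (R : CBER B) (ν : Measure B) : Prop :=
  ∀ f : B → B → ℝ≥0∞, Measurable (Function.uncurry f) →
    ∫⁻ b, ∑' b' : {x // R.rel b x}, f b b' ∂ν =
      ∫⁻ b, ∑' b' : {x // R.rel b x}, f (b' : B) b ∂ν

/-- A Borel sequence of finite-subset-valued maps with graphs contained in `R`. -/
def CBER.AdaptedSeq (R : CBER B) (F : ℕ → B → Finset B) : Prop :=
  (∀ n, MeasurableSet {p : B × B | p.2 ∈ F n p.1}) ∧
  ∀ n b b', b' ∈ F n b → R.rel b b'

/-- Inner automorphisms of `R`: Borel bijections whose graph is contained in `R`. -/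
def innerAuts (R : CBER B) : Set (Equiv.Perm B) :=
  {φ | Measurable φ ∧ Measurable φ.symm ∧ ∀ b, R.rel b (φ b)}

/-- `Φ` generates `R` (mod `ν`). -/
def Generating (R : CBER B) (Φ : Set (Equiv.Perm B)) (ν : Measure B) : Prop :=
  ∀ᵐ b ∂ν, ∀ b', R.rel b b' → ∃ φ ∈ Subgroup.closure Φ, φ b = b'

section Defect

open Finset

variable {α : Type*} [DecidableEq α]

noncomputable def invarianceDefect (s : Finset α) (φ : Equiv.Perm α) : ℝ :=
  (#(symmDiff s (s.image φ)) : ℝ) / #s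

lemma invarianceDefect_nonneg (s : Finset α) (φ : Equiv.Perm α) : 0 ≤ invarianceDefect s φ := by
  unfold invarianceDefect
  positivity

@[simp]
lemma invarianceDefect_one (s : Finset α) : invarianceDefect s 1 = 0 := by
  simp [invarianceDefect]

lemma invarianceDefect_inv (s : Finset α) (φ : Equiv.Perm α) :
    invarianceDefect s φ⁻¹ = invarianceDefect s φ := by
  have : symmDiff s (s.image φ) = (symmDiff s (s.image ⇑φ⁻¹)).image φ := by
    rw [image_symmDiff _ _ φ.injective, image_image, Equiv.Perm.coe_inv, Equiv.self_comp_symm,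
      image_id, symmDiff_comm]
  rw [invarianceDefect, invarianceDefect, this, card_image_of_injective _ φ.injective]

lemma invarianceDefect_mul_le (s : Finset α) (φ ψ : Equiv.Perm α) :
    invarianceDefect s (φ * ψ) ≤ invarianceDefect s φ + invarianceDefect s ψ := by
  rw [invarianceDefect, invarianceDefect, invarianceDefect, ← add_div]
  gcongr
  have hφψ : s.image ⇑(φ * ψ) = (s.image ψ).image φ := by
    rw [image_image, Equiv.Perm.coe_mul]
  calc (#(symmDiff s (s.image ⇑(φ * ψ))) : ℝ)
      ≤ #(symmDiff s (s.image φ) ∪ symmDiff (s.image φ) ((s.image ψ).image φ)) := by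
        rw [hφψ]; exact_mod_cast card_le_card (symmDiff_triangle _ _ _)
    _ ≤ #(symmDiff s (s.image φ)) + #(symmDiff (s.image φ) ((s.image ψ).image φ)) := by
        exact_mod_cast card_union_le _ _
    _ = #(symmDiff s (s.image φ)) + #(symmDiff s (s.image ψ)) := by
        rw [← image_symmDiff _ _ φ.injective, card_image_of_injective _ φ.injective]

lemma abs_average_sub_comp_le {f : α → ℝ} {C : ℝ} (hC : ∀ b, |f b| ≤ C)
    (φ : Equiv.Perm α) (s : Finset α) :
    |(#s : ℝ)⁻¹ * ∑ b ∈ s, (f b - f (φ b))| ≤ C * invarianceDefect s φ := by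
  rcases s.eq_empty_or_nonempty with rfl | hs
  · simp [invarianceDefect]
  set t := s.image φ
  have hsum : ∑ b ∈ s, (f b - f (φ b)) = ∑ b ∈ s \ t, f b - ∑ b ∈ t \ s, f b := by
    rw [sum_sub_distrib, sum_sdiff_sub_sum_sdiff,
      sum_image fun x _ y _ h => φ.injective h]
  have hbound : |∑ b ∈ s \ t, f b - ∑ b ∈ t \ s, f b| ≤ C * #(symmDiff s t) := by
    calc |∑ b ∈ s \ t, f b - ∑ b ∈ t \ s, f b|
        ≤ ∑ b ∈ s \ t, |f b| + ∑ b ∈ t \ s, |f b| :=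
          (abs_sub _ _).trans (add_le_add (abs_sum_le_sum_abs _ _) (abs_sum_le_sum_abs _ _))
      _ = ∑ b ∈ symmDiff s t, |f b| := by
          rw [symmDiff_def, sup_eq_union, sum_union disjoint_sdiff_sdiff]
      _ ≤ #(symmDiff s t) • C := sum_le_card_nsmul _ _ _ fun b _ => hC b
      _ = C * #(symmDiff s t) := by rw [nsmul_eq_mul, mul_comm]
  rw [hsum, abs_mul, abs_inv, Nat.abs_cast, invarianceDefect, mul_div_assoc',
    le_div_iff₀ (by exact_mod_cast hs.card_pos), inv_mul_eq_div, div_mul_cancel₀ _ (by positivity)]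
  exact hbound

end Defect

section AsymptoticInvariance

variable {α : Type*} [DecidableEq α] [MeasurableSpace α]

def asymptoticInvarianceSubgroup (μ : Measure α) (F : ℕ → α → Finset α) :
    Subgroup (Equiv.Perm α) where
  carrier := {φ | ∀ᵐ b ∂μ, Tendsto (fun n => invarianceDefect (F n b) φ) atTop (nhds 0)}
  one_mem' := by simp
  mul_mem' {φ ψ} (hφ : ∀ᵐ _ ∂μ, _) (hψ : ∀ᵐ _ ∂μ, _) := by
    show ∀ᵐ _ ∂μ, _
    filter_upwards [hφ, hψ] with b hφb hψb
    refine squeeze_zero (fun n => invarianceDefect_nonneg _ _)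
      (fun n => invarianceDefect_mul_le _ φ ψ) ?_
    simpa using hφb.add hψb
  inv_mem' {φ} hφ := by simpa only [Set.mem_ofPred_eq, invarianceDefect_inv] using hφ

lemma ae_tendsto_average_sub_comp {μ : Measure α} {F : ℕ → α → Finset α}
    {φ : Equiv.Perm α} (hφ : φ ∈ asymptoticInvarianceSubgroup μ F) {f : α → ℝ} {C : ℝ}
    (hC : ∀ b, |f b| ≤ C) :
    ∀ᵐ b ∂μ, Tendsto (fun n => ((F n b).card : ℝ)⁻¹ * ∑ b' ∈ F n b, (f b' - f (φ b')))
      atTop (nhds 0) := by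
  filter_upwards [hφ] with b hb
  refine squeeze_zero_norm (fun n => abs_average_sub_comp_le hC φ (F n b)) ?_
  simpa using hb.const_mul C

end AsymptoticInvariance

def measurablePerms (α : Type*) [MeasurableSpace α] : Subgroup (Equiv.Perm α) where
  carrier := {φ | Measurable φ ∧ Measurable φ.symm}
  one_mem' := ⟨measurable_id, measurable_id⟩
  mul_mem' hφ hψ := ⟨hφ.1.comp hψ.1, hψ.2.comp hφ.2⟩
  inv_mem' hφ := ⟨hφ.2, hφ.1⟩

lemma Subgroup.countable_closure {G : Type*} [Group G] {s : Set G} (hs : s.Countable) :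
    (Subgroup.closure s : Set G).Countable := by
  have := hs.to_subtype
  rw [← Subtype.range_coe (s := s), ← FreeGroup.range_lift_eq_closure, MonoidHom.coe_range]
  exact Set.countable_range _

lemma Subgroup.apply_mem_biInter_preimage_iff {α : Type*} {G : Subgroup (Equiv.Perm α)}
    {ψ : Equiv.Perm α} (hψ : ψ ∈ G) (P : Set α) (b : α) :
    ψ b ∈ ⋂ φ ∈ G, ⇑φ ⁻¹' P ↔ b ∈ ⋂ φ ∈ G, ⇑φ ⁻¹' P := by
  simp only [Set.mem_iInter, Set.mem_preimage]
  refine ⟨fun h φ hφ => ?_, fun h φ hφ => ?_⟩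
  · simpa using h (φ * ψ⁻¹) (G.mul_mem hφ (G.inv_mem hψ))
  · simpa using h (φ * ψ) (G.mul_mem hφ hψ)

section Positivity

variable {α : Type*} [MeasurableSpace α] {μ : Measure α} {r : α → ℝ}

lemma measure_eq_zero_of_setIntegral_nonpos {S : Set α} (hS : MeasurableSet S)
    (hr : IntegrableOn r S μ) (hpos : ∀ b ∈ S, 0 < r b) (hint : ∫ b in S, r b ∂μ ≤ 0) :
    μ S = 0 := by
  have hnonneg : 0 ≤ᵐ[μ.restrict S] r := ae_restrict_of_forall_mem hS fun b hb => (hpos b hb).le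
  have hsupp : Function.support r ∩ S = S := Set.inter_eq_right.2 fun b hb => (hpos b hb).ne'
  have := (setIntegral_pos_iff_support_of_nonneg_ae hnonneg hr).not.1 hint.not_gt
  rwa [hsupp, not_lt, nonpos_iff_eq_zero] at this

lemma measure_setOf_pos_sdiff_eq_zero (hrm : Measurable r) (hr : Integrable r μ)
    {Q : Set α} (hQ : MeasurableSet Q)
    (hle : ∫ b in {b | 0 < r b}, r b ∂μ ≤ ∫ b in Q, r b ∂μ) :
    μ ({b | 0 < r b} \ Q) = 0 := by
  set P := {b | 0 < r b}
  have hP : MeasurableSet P := measurableSet_lt measurable_const hrm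
  refine measure_eq_zero_of_setIntegral_nonpos (hP.diff hQ) hr.integrableOn (fun b hb => hb.1) ?_
  have hPQ := integral_inter_add_sdiff hQ (hr.integrableOn (s := P))
  have hQP := integral_inter_add_sdiff hP (hr.integrableOn (s := Q))
  have hQP_nonpos : ∫ b in Q \ P, r b ∂μ ≤ 0 :=
    setIntegral_nonpos (hQ.diff hP) fun b hb => not_lt.1 hb.2
  rw [Set.inter_comm] at hQP
  linarith

end Positivity

section Orthogonality

variable (R : CBER B) {ν : Measure B} {G : Subgroup (Equiv.Perm B)}
  (hGc : (G : Set (Equiv.Perm B)).Countable) (hGm : G ≤ measurablePerms B)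
  (hgen : ∀ᵐ b ∂ν, ∀ b', R.rel b b' → ∃ ψ ∈ G, ψ b = b')
  {r : B → ℝ} (hrm : Measurable r) (hr : Integrable r ν)

include hGc hGm hgen hrm hr in
lemma ae_nonpos_of_setIntegral_invariant
    (hcob : ∀ A, MeasurableSet A → ∀ ψ ∈ G, ∫ b in ψ ⁻¹' A, r b ∂ν = ∫ b in A, r b ∂ν)
    (hinv : ∀ A, MeasurableSet A → (∀ᵐ b ∂ν, ∀ b', R.rel b b' → (b ∈ A ↔ b' ∈ A)) →
      ∫ b in A, r b ∂ν = 0) :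
    ∀ᵐ b ∂ν, r b ≤ 0 := by
  set P := {b | 0 < r b}
  have hP : MeasurableSet P := measurableSet_lt measurable_const hrm
  set core := ⋂ ψ ∈ G, ⇑ψ ⁻¹' P
  have hcore : MeasurableSet core := .biInter hGc fun ψ hψ => (hGm hψ).1 hP
  have hcoreP : core ⊆ P := fun b hb => by simpa using Set.mem_iInter₂.1 hb 1 G.one_mem
  have hPcore : ν (P \ core) = 0 := by
    have : P \ core = ⋃ ψ ∈ (G : Set (Equiv.Perm B)), P \ ψ ⁻¹' P := by
      ext b; simp [core, Set.mem_iInter]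
    rw [this, measure_biUnion_null_iff hGc]
    exact fun ψ hψ =>
      measure_setOf_pos_sdiff_eq_zero hrm hr ((hGm hψ).1 hP) (hcob P hP ψ hψ).ge
  have hcore_inv : ∀ᵐ b ∂ν, ∀ b', R.rel b b' → (b ∈ core ↔ b' ∈ core) := by
    filter_upwards [hgen] with b hb b' hbb'
    obtain ⟨ψ, hψ, rfl⟩ := hb b' hbb'
    exact (G.apply_mem_biInter_preimage_iff hψ P b).symm
  have hcore_ae : core =ᵐ[ν] P :=
    ae_eq_set.2 ⟨by rw [Set.sdiff_eq_empty.2 hcoreP, measure_empty], hPcore⟩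
  have hPint : ∫ b in P, r b ∂ν = 0 := by
    rw [← setIntegral_congr_set hcore_ae]
    exact hinv core hcore hcore_inv
  have hPnull : ν P = 0 :=
    measure_eq_zero_of_setIntegral_nonpos hP hr.integrableOn (fun b hb => hb) hPint.le
  exact ae_iff.2 (by simpa [P, not_le] using hPnull)

include hGc hGm hgen hrm hr in
lemma ae_eq_zero_of_setIntegral_invariant
    (hcob : ∀ A, MeasurableSet A → ∀ ψ ∈ G, ∫ b in ψ ⁻¹' A, r b ∂ν = ∫ b in A, r b ∂ν)
    (hinv : ∀ A, MeasurableSet A → (∀ᵐ b ∂ν, ∀ b', R.rel b b' → (b ∈ A ↔ b' ∈ A)) →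
      ∫ b in A, r b ∂ν = 0) :
    r =ᵐ[ν] 0 := by
  have hle := ae_nonpos_of_setIntegral_invariant R hGc hGm hgen hrm hr hcob hinv
  have hge := ae_nonpos_of_setIntegral_invariant R hGc hGm hgen hrm.neg hr.neg
    (by simpa only [Pi.neg_apply, integral_neg, neg_inj] using hcob)
    (by simpa only [Pi.neg_apply, integral_neg, neg_eq_zero] using hinv)
  filter_upwards [hle, hge] with b hb hb'
  exact le_antisymm hb (neg_nonpos.1 hb')

end Orthogonality

def invariantL2 (R : CBER B) (ν : Measure B) : Set (B → ℝ) :=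
  {g | MemLp g 2 ν ∧ ∀ᵐ b ∂ν, ∀ b', R.rel b b' → g b = g b'}

def boundedCoboundaries (G : Set (Equiv.Perm B)) : Set (B → ℝ) :=
  {g | ∃ f₀ : B → ℝ, ∃ φ ∈ G, Measurable f₀ ∧ (∃ C, ∀ b, |f₀ b| ≤ C) ∧
    g = fun b => f₀ b - f₀ (φ b)}

lemma memLp_of_mem_boundedCoboundaries {ν : Measure B} [IsFiniteMeasure ν]
    {G : Set (Equiv.Perm B)} (hG : G ⊆ measurablePerms B) {g : B → ℝ}
    (hg : g ∈ boundedCoboundaries G) (p : ℝ≥0∞) : MemLp g p ν := by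
  obtain ⟨f₀, φ, hφ, hf₀, ⟨C, hC⟩, rfl⟩ := hg
  refine .of_bound (hf₀.sub (hf₀.comp (hG hφ).1)).aestronglyMeasurable (C + C)
    (ae_of_all _ fun b => ?_)
  exact (abs_sub _ _).trans (add_le_add (hC b) (hC _))

lemma ae_eq_zero_of_forall_integral_mul_eq_zero (R : CBER B) {ν : Measure B} [IsFiniteMeasure ν]
    {G : Subgroup (Equiv.Perm B)} (hGc : (G : Set (Equiv.Perm B)).Countable)
    (hGm : G ≤ measurablePerms B) (hgen : ∀ᵐ b ∂ν, ∀ b', R.rel b b' → ∃ ψ ∈ G, ψ b = b')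
    {r : B → ℝ} (hrm : Measurable r) (hr : Integrable r ν)
    (horth : ∀ g ∈ invariantL2 R ν ∪ boundedCoboundaries G, ∫ b, r b * g b ∂ν = 0) :
    r =ᵐ[ν] 0 := by
  refine ae_eq_zero_of_setIntegral_invariant R hGc hGm hgen hrm hr
    (fun A hA ψ hψ => ?_) (fun A hA hAinv => ?_)
  · have hcob : (fun b => A.indicator 1 b - A.indicator 1 (ψ b)) ∈ boundedCoboundaries G :=
      ⟨A.indicator 1, ψ, hψ, measurable_one.indicator hA,
        ⟨1, fun b => by by_cases hb : b ∈ A <;> simp [hb]⟩, rfl⟩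
    have hfun : (fun b => r b * (A.indicator 1 b - A.indicator 1 (ψ b)))
        = fun b => A.indicator r b - (ψ ⁻¹' A).indicator r b := by
      ext b
      by_cases hb : b ∈ A <;> by_cases hψb : ψ b ∈ A <;> simp [hb, hψb]
    have hψA : MeasurableSet (ψ ⁻¹' A) := (hGm hψ).1 hA
    have := horth _ (Or.inr hcob)
    rw [hfun, integral_sub (hr.indicator hA) (hr.indicator hψA), integral_indicator hA,
      integral_indicator hψA, sub_eq_zero] at this
    exact this.symm
  · have hinvL2 : A.indicator 1 ∈ invariantL2 R ν := by
      refine ⟨memLp_indicator_const 2 hA 1 (Or.inr (measure_ne_top _ _)), ?_⟩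
      filter_upwards [hAinv] with b hb b' hbb'
      by_cases h : b ∈ A
      · simp [h, (hb b' hbb').1 h]
      · simp [h, mt (hb b' hbb').2 h]
    have hfun : (fun b => r b * A.indicator 1 b) = A.indicator r := by
      ext b
      by_cases hb : b ∈ A <;> simp [hb]
    simpa only [hfun, integral_indicator hA] using horth _ (Or.inl hinvL2)

lemma exists_mem_span_ae_eq_of_mem_span_toLp {α : Type*} [MeasurableSpace α] {μ : Measure α}
    {p : ℝ≥0∞} {S : Set (α → ℝ)} (hS : ∀ g ∈ S, MemLp g p μ) {y : Lp ℝ p μ}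
    (hy : y ∈ Submodule.span ℝ (Set.range fun g : S => (hS g g.2).toLp g)) :
    ∃ h ∈ Submodule.span ℝ S, y =ᵐ[μ] h := by
  induction hy using Submodule.span_induction with
  | mem x hx =>
    obtain ⟨⟨g, hg⟩, rfl⟩ := hx
    exact ⟨g, Submodule.subset_span hg, (hS g hg).coeFn_toLp⟩
  | zero => exact ⟨0, zero_mem _, Lp.coeFn_zero ..⟩
  | add u v _ _ hu hv =>
    obtain ⟨h₁, hh₁, hu⟩ := hu
    obtain ⟨h₂, hh₂, hv⟩ := hv
    exact ⟨h₁ + h₂, add_mem hh₁ hh₂, (Lp.coeFn_add u v).trans (hu.add hv)⟩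
  | smul c u _ hu =>
    obtain ⟨h, hh, hu⟩ := hu
    exact ⟨c • h, Submodule.smul_mem _ c hh, (Lp.coeFn_smul c u).trans (hu.const_smul c)⟩

lemma exists_mem_span_eLpNorm_sub_lt {α : Type*} [MeasurableSpace α] {μ : Measure α}
    {S : Set (α → ℝ)} (hS : ∀ g ∈ S, MemLp g 2 μ)
    (horth : ∀ z : Lp ℝ 2 μ, (∀ g ∈ S, ∫ a, z a * g a ∂μ = 0) → z = 0)
    {f : α → ℝ} (hf : MemLp f 2 μ) {ε : ℝ} (hε : 0 < ε) :
    ∃ h ∈ Submodule.span ℝ S, eLpNorm (f - h) 2 μ < ENNReal.ofReal ε := by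
  set K : Submodule ℝ (Lp ℝ 2 μ) := Submodule.span ℝ (Set.range fun g : S => (hS g g.2).toLp g)
  have hK : K.topologicalClosure = ⊤ := by
    rw [Submodule.topologicalClosure_eq_top_iff, Submodule.eq_bot_iff]
    refine fun z hz => horth z fun g hg => ?_
    have := (Submodule.mem_orthogonal' K z).1 hz _ (Submodule.subset_span ⟨⟨g, hg⟩, rfl⟩)
    rw [L2.inner_def] at this
    rw [← this]
    exact integral_congr_ae ((hS g hg).coeFn_toLp.mono fun b hb => by simp [hb, mul_comm])
  have hfK : hf.toLp f ∈ closure (K : Set (Lp ℝ 2 μ)) := by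
    rw [← Submodule.topologicalClosure_coe, hK]; trivial
  obtain ⟨y, hyK, hy⟩ := Metric.mem_closure_iff.1 hfK ε hε
  obtain ⟨h, hh, hyh⟩ := exists_mem_span_ae_eq_of_mem_span_toLp hS hyK
  refine ⟨h, hh, ?_⟩
  calc eLpNorm (f - h) 2 μ = eLpNorm (⇑(hf.toLp f) - ⇑y) 2 μ :=
        eLpNorm_congr_ae (hf.coeFn_toLp.symm.sub hyh.symm)
    _ = ENNReal.ofReal (dist (hf.toLp f) y) := by rw [← Lp.edist_def, Lp.edist_dist]
    _ < ENNReal.ofReal ε := (ENNReal.ofReal_lt_ofReal_iff hε).2 hy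

theorem dense_good_functions_general [DecidableEq B] (R : CBER B) (ν : Measure B)
    [IsProbabilityMeasure ν]
    (F : ℕ → B → Finset B)
    (Φ : Set (Equiv.Perm B)) (hΦc : Φ.Countable) (hΦi : Φ ⊆ innerAuts R)
    (hgen : Generating R Φ ν)
    (hai : ∀ φ ∈ Φ, ∀ᵐ b ∂ν,
      Tendsto (fun n => ((symmDiff (F n b) ((F n b).image φ)).card : ℝ) / ((F n b).card : ℝ))
        atTop (nhds 0)) :
    (∀ f : B → ℝ, Measurable f → (∃ C, ∀ b, |f b| ≤ C) → ∀ φ ∈ Subgroup.closure Φ,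
      ∀ᵐ b ∂ν,
        Tendsto (fun n => (((F n b).card : ℝ))⁻¹ * ∑ b' ∈ F n b, (f b' - f (φ b')))
          atTop (nhds 0)) ∧
    (∀ f : B → ℝ, MemLp f 2 ν → ∀ ε : ℝ, 0 < ε →
      ∃ h ∈ Submodule.span ℝ
          ({g : B → ℝ | MemLp g 2 ν ∧ ∀ᵐ b ∂ν, ∀ b', R.rel b b' → g b = g b'} ∪
           {g : B → ℝ | ∃ f₀ : B → ℝ, ∃ φ ∈ Subgroup.closure Φ,
              Measurable f₀ ∧ (∃ C, ∀ b, |f₀ b| ≤ C) ∧ g = fun b => f₀ b - f₀ (φ b)}),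
        eLpNorm (f - h) 2 ν < ENNReal.ofReal ε) := by
  have hai' : Subgroup.closure Φ ≤ asymptoticInvarianceSubgroup ν F :=
    (Subgroup.closure_le _).2 hai
  have hΦm : Subgroup.closure Φ ≤ measurablePerms B :=
    (Subgroup.closure_le _).2 fun φ hφ => ⟨(hΦi hφ).1, (hΦi hφ).2.1⟩
  refine ⟨fun f _ ⟨C, hC⟩ φ hφ => ae_tendsto_average_sub_comp (hai' hφ) hC,
    fun f hf ε hε => exists_mem_span_eLpNorm_sub_lt ?_ (fun z hz => ?_) hf hε⟩
  · rintro g (hg | hg)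
    exacts [hg.1, memLp_of_mem_boundedCoboundaries hΦm hg 2]
  · rw [Lp.eq_zero_iff_ae_eq_zero]
    exact ae_eq_zero_of_forall_integral_mul_eq_zero R (Subgroup.countable_closure hΦc) hΦm hgen
      (Lp.stronglyMeasurable z).measurable ((Lp.memLp z).integrable one_le_two) hz

/-- Dense set of good functions: if `F` is asymptotically invariant with respect to a
countable generating set `Φ` of inner automorphisms, then (1) for every `f ∈ L^∞(B)` and
every `φ ∈ ⟨Φ⟩` the averages `A_n[F; f - f∘φ]` converge pointwise a.e. to `0`; and (2) the
linear span of the `R`-invariant `L²` functions together with the coboundaries `f - f∘φ`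
(`f ∈ L^∞`, `φ ∈ ⟨Φ⟩`) is dense in `L²(B,ν)`. -/
theorem dense_good_functions [DecidableEq B] (R : CBER B) (ν : Measure B)
    [IsProbabilityMeasure ν] (hinv : R.Invariant ν)
    (F : ℕ → B → Finset B) (hF : R.AdaptedSeq F)
    (Φ : Set (Equiv.Perm B)) (hΦc : Φ.Countable) (hΦi : Φ ⊆ innerAuts R)
    (hgen : Generating R Φ ν)
    (hai : ∀ φ ∈ Φ, ∀ᵐ b ∂ν,
      Tendsto (fun n => ((symmDiff (F n b) ((F n b).image φ)).card : ℝ) / ((F n b).card : ℝ))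
        atTop (nhds 0)) :
    (∀ f : B → ℝ, Measurable f → (∃ C, ∀ b, |f b| ≤ C) → ∀ φ ∈ Subgroup.closure Φ,
      ∀ᵐ b ∂ν,
        Tendsto (fun n => (((F n b).card : ℝ))⁻¹ * ∑ b' ∈ F n b, (f b' - f (φ b')))
          atTop (nhds 0)) ∧
    (∀ f : B → ℝ, MemLp f 2 ν → ∀ ε : ℝ, 0 < ε →
      ∃ h ∈ Submodule.span ℝ
          ({g : B → ℝ | MemLp g 2 ν ∧ ∀ᵐ b ∂ν, ∀ b', R.rel b b' → g b = g b'} ∪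
           {g : B → ℝ | ∃ f₀ : B → ℝ, ∃ φ ∈ Subgroup.closure Φ,
              Measurable f₀ ∧ (∃ C, ∀ b, |f₀ b| ≤ C) ∧ g = fun b => f₀ b - f₀ (φ b)}),
        eLpNorm (f - h) 2 ν < ENNReal.ofReal ε) :=
  dense_good_functions_general R ν F Φ hΦc hΦi hgen hai
end
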